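/- Let D be the (2N)×(2N) symmetric matrix in block form D = [[0, J],[J, 0]] where J is the N×N all-ones matrix (the 2-cluster TSP), with N ≥ 1. Then −PDP, with P = I − J_{2N}/(2N), has eigenvalue N with eigenvector (1,...,1,−1,...,−1)ᵀ, and all other eigenvalues equal to 0; in particular the rank of −PDP is 1. -/

import Mathlib

/-!
With `s = (1,…,1,-1,…,-1)`, the indicator that `i` and `j` lie in different clusters is
`(1 - sᵢ sⱼ) / 2`, so `D = (J - s sᵀ) / 2`. The centering matrix `P` kills the all-ones vector and,
since `s` sums to zero, fixes `s`; hence `-PDP = s sᵀ / 2`, a rank-one matrix whose only nonzero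
eigenvalue is `sᵀ s / 2 = N`.
-/

open Matrix Polynomial

theorem Matrix.rank_pos_of_ne_zero {K m n : Type*} [Field K] [Fintype m] [Fintype n]
    [DecidableEq n] {A : Matrix m n K} (hA : A ≠ 0) : 0 < A.rank := by
  rw [Nat.pos_iff_ne_zero, Matrix.rank, Ne, Submodule.finrank_eq_zero, LinearMap.range_eq_bot]
  exact fun h => hA (Matrix.toLin'.injective (by rw [map_zero]; exact h))

theorem Matrix.rank_vecMulVec_eq_one {K n : Type*} [Field K] [Fintype n]
    [DecidableEq n] {u v : n → K} (hu : u ≠ 0) (hv : v ≠ 0) :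
    (vecMulVec u v).rank = 1 :=
  le_antisymm (rank_vecMulVec_le u v) (rank_pos_of_ne_zero (vecMulVec_ne_zero hu hv))

theorem Matrix.charpoly_vecMulVec_eq_X_pow_mul {R n : Type*} [CommRing R] [Fintype n]
    [DecidableEq n] [Nonempty n] (u v : n → R) :
    (vecMulVec u v).charpoly = X ^ (Fintype.card n - 1) * (X - C (u ⬝ᵥ v)) := by
  have hn : Fintype.card n - 1 + 1 = Fintype.card n := Nat.sub_add_cancel Fintype.card_pos
  rw [charpoly_vecMulVec, mul_sub, ← pow_succ, hn, smul_eq_C_mul, mul_comm]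

section Centering

variable (K ι : Type*) [Field K] [Fintype ι] [DecidableEq ι]

def centeringMatrix : Matrix ι ι K :=
  1 - (Fintype.card ι : K)⁻¹ • vecMulVec 1 1

variable {K ι}

theorem centeringMatrix_transpose : (centeringMatrix K ι)ᵀ = centeringMatrix K ι := by
  rw [centeringMatrix, transpose_sub, transpose_one, transpose_smul, transpose_vecMulVec]

theorem centeringMatrix_mulVec_one (h : (Fintype.card ι : K) ≠ 0) :
    centeringMatrix K ι *ᵥ 1 = 0 := by
  rw [centeringMatrix, sub_mulVec, one_mulVec, smul_mulVec, vecMulVec_mulVec, op_smul_eq_smul,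
    one_dotProduct_one, smul_smul, inv_mul_cancel₀ h, one_smul, sub_self]

theorem centeringMatrix_mulVec_of_one_dotProduct_eq_zero {v : ι → K} (hv : 1 ⬝ᵥ v = 0) :
    centeringMatrix K ι *ᵥ v = v := by
  rw [centeringMatrix, sub_mulVec, one_mulVec, smul_mulVec, vecMulVec_mulVec, op_smul_eq_smul,
    hv, zero_smul, smul_zero, sub_zero]

theorem centeringMatrix_mul_vecMulVec_mul (u v : ι → K) :
    centeringMatrix K ι * vecMulVec u v * centeringMatrix K ι =
      vecMulVec (centeringMatrix K ι *ᵥ u) (centeringMatrix K ι *ᵥ v) := by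
  rw [mul_vecMulVec, vecMulVec_mul, ← mulVec_transpose, centeringMatrix_transpose]

theorem neg_centeringMatrix_mul_mul_eq_vecMulVec (h : (Fintype.card ι : K) ≠ 0) {s : ι → K}
    (hs : 1 ⬝ᵥ s = 0) :
    -(centeringMatrix K ι * ((2 : K)⁻¹ • (vecMulVec 1 1 - vecMulVec s s)) * centeringMatrix K ι) =
      vecMulVec ((2 : K)⁻¹ • s) s := by
  rw [Matrix.mul_smul, Matrix.smul_mul, Matrix.mul_sub, Matrix.sub_mul,
    centeringMatrix_mul_vecMulVec_mul, centeringMatrix_mul_vecMulVec_mul,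
    centeringMatrix_mulVec_one h, centeringMatrix_mulVec_of_one_dotProduct_eq_zero hs,
    zero_vecMulVec, zero_sub, smul_neg, neg_neg, smul_vecMulVec]

end Centering

def clusterSign (N : ℕ) : Fin (2 * N) → ℝ := fun i => if (i : ℕ) < N then 1 else -1

theorem one_dotProduct_clusterSign (N : ℕ) : 1 ⬝ᵥ clusterSign N = 0 := by
  simp only [one_dotProduct, clusterSign]
  rw [Fin.sum_univ_eq_sum_range (fun k => if k < N then (1 : ℝ) else -1),
    two_mul, Finset.sum_range_add, Finset.sum_ite_of_true fun k hk => Finset.mem_range.mp hk]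
  simp

theorem clusterSign_dotProduct_self (N : ℕ) : clusterSign N ⬝ᵥ clusterSign N = 2 * N := by
  have hsq : ∀ i, clusterSign N i * clusterSign N i = 1 := fun i => by
    unfold clusterSign; split <;> norm_num
  simp [dotProduct, hsq]

theorem clusterSign_ne_zero {N : ℕ} (hN : N ≠ 0) : clusterSign N ≠ 0 := by
  intro h
  have := congrFun h ⟨0, by omega⟩
  simp [clusterSign, Nat.pos_of_ne_zero hN] at this

theorem eq_smul_sub_vecMulVec_clusterSign {N : ℕ} {D : Matrix (Fin (2 * N)) (Fin (2 * N)) ℝ}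
    (hD : ∀ i j, D i j = if ((i : ℕ) < N ↔ (j : ℕ) < N) then 0 else 1) :
    D = (2 : ℝ)⁻¹ • (vecMulVec 1 1 - vecMulVec (clusterSign N) (clusterSign N)) := by
  ext i j
  rw [hD]
  by_cases hi : (i : ℕ) < N <;> by_cases hj : (j : ℕ) < N <;>
    simp [clusterSign, vecMulVec_apply, hi, hj] <;> norm_num

/-- For the 2-cluster TSP matrix `D = [[0,J],[J,0]]`, the matrix `-PDP` has eigenvalue `N`
with eigenvector `(1,…,1,-1,…,-1)` and all other eigenvalues `0`; its rank is `1`. -/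
theorem two_cluster_eigen {N : ℕ} (hN : 1 ≤ N)
    (D : Matrix (Fin (2 * N)) (Fin (2 * N)) ℝ)
    (hD : ∀ i j, D i j = if ((i : ℕ) < N ↔ (j : ℕ) < N) then 0 else 1)
    (P : Matrix (Fin (2 * N)) (Fin (2 * N)) ℝ)
    (hP : P = 1 - ((2 * N : ℕ) : ℝ)⁻¹ • Matrix.of (fun _ _ => (1 : ℝ)))
    (w : Fin (2 * N) → ℝ)
    (hw : ∀ i, w i = if (i : ℕ) < N then 1 else -1) :
    (-(P * D * P)).mulVec w = (N : ℝ) • w ∧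
    (-(P * D * P)).charpoly =
      Polynomial.X ^ (2 * N - 1) * (Polynomial.X - Polynomial.C (N : ℝ)) ∧
    (-(P * D * P)).rank = 1 := by
  obtain rfl : w = clusterSign N := funext hw
  have hP : P = centeringMatrix ℝ (Fin (2 * N)) := by
    rw [hP, centeringMatrix, Fintype.card_fin]
    congr 2
    ext i j
    simp [vecMulVec_apply]
  have hcard : (Fintype.card (Fin (2 * N)) : ℝ) ≠ 0 := by
    rw [Fintype.card_fin]
    exact Nat.cast_ne_zero.mpr (by omega)
  have hM : -(P * D * P) = vecMulVec ((2 : ℝ)⁻¹ • clusterSign N) (clusterSign N) := by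
    rw [hP, eq_smul_sub_vecMulVec_clusterSign hD,
      neg_centeringMatrix_mul_mul_eq_vecMulVec hcard (one_dotProduct_clusterSign N)]
  have hdot : (2 : ℝ)⁻¹ • clusterSign N ⬝ᵥ clusterSign N = N := by
    rw [smul_dotProduct, clusterSign_dotProduct_self, smul_eq_mul]
    ring
  have : Nonempty (Fin (2 * N)) := ⟨⟨0, by omega⟩⟩
  refine ⟨?_, ?_, ?_⟩
  · rw [hM, vecMulVec_mulVec, op_smul_eq_smul, smul_smul, clusterSign_dotProduct_self]
    congr 1
    ring
  · rw [hM, charpoly_vecMulVec_eq_X_pow_mul, Fintype.card_fin, hdot]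
  · rw [hM]
    exact rank_vecMulVec_eq_one (smul_ne_zero (by norm_num) (clusterSign_ne_zero (by omega)))
      (clusterSign_ne_zero (by omega))
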